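/- For every m ≥ 1: (1) the first occurrence of E_{m,1} in the doubling sequence D∞ starts at position 1 (i.e., E_{m,1} is a prefix of D∞ and the prefix of D∞ preceding its first occurrence is empty); (2) the first occurrence of E_{m,2} in D∞ starts at position 2^m+1 (i.e., the prefix of D∞ preceding its first occurrence equals A_m). -/

import Mathlib

namespace PD

/-- The period-doubling substitution on the alphabet `Bool`,
where `false` stands for the letter `a` and `true` for the letter `b`:
`σ(a) = ab`, `σ(b) = aa`. -/
def sub : Bool → List Bool
  | false => [false, true]
  | true  => [false, false]

/-- The substitution applied to a finite word. -/
def subW (w : List Bool) : List Bool := w.flatMap sub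

/-- `A m = σ^m(a)`. -/
def A (m : ℕ) : List Bool := subW^[m] [false]

/-- `B m = σ^m(b)`. -/
def B (m : ℕ) : List Bool := subW^[m] [true]

/-- The doubling sequence `D∞` (0-indexed: `D n` is the `(n+1)`-th letter),
the fixed point of `σ` beginning with `a`; `A m` is a prefix of `A (m+1)`,
and `A (n+1)` has length `2^(n+1) > n`. -/
def D (n : ℕ) : Bool := (A (n + 1)).getD n false

/-- `δ m`, the last letter of `A m`. -/
def delta (m : ℕ) : Bool := (A m).getLastD false

/-- The envelope words (`i ∈ {1,2}`): `E m 1 = A m` minus its last letter,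
`E m 2 = A (m-1) ++ (A m` minus its last letter `)`. -/
def E (m i : ℕ) : List Bool :=
  if i = 1 then (A m).dropLast else A (m - 1) ++ (A m).dropLast

/-- `w` occurs at the (1-indexed) position `j` in the finite word `τ`. -/
def OccursIn (w τ : List Bool) (j : ℕ) : Prop :=
  1 ≤ j ∧ (τ.drop (j - 1)).take w.length = w

/-- `w` occurs at the (1-indexed) position `j` in the doubling sequence. -/
def OccursD (w : List Bool) (j : ℕ) : Prop :=
  1 ≤ j ∧ ∀ k < w.length, D (j - 1 + k) = w.getD k false

/-- `w` is a factor of the doubling sequence. -/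
def FactorD (w : List Bool) : Prop := ∃ j, OccursD w j

/-- `L w p`: the (1-indexed) starting position of the `p`-th occurrence of `w`
in the doubling sequence, occurrences being ordered by starting position.
(Each factor occurs infinitely often, so `Nat.nth` enumerates all occurrences
in increasing order.) -/
noncomputable def L (w : List Bool) (p : ℕ) : ℕ := Nat.nth (OccursD w) (p - 1)

/-- The strict total order on envelope words:
`E m₁ i₁ ⊏ E m₂ i₂` iff `m₁ < m₂`, or `m₁ = m₂` and `i₁ < i₂`. -/
def EnvLt (m₁ i₁ m₂ i₂ : ℕ) : Prop := m₁ < m₂ ∨ (m₁ = m₂ ∧ i₁ < i₂)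

/-- `Env(w) = E m i`: the envelope word `E m i` is the `⊏`-minimal envelope
word containing `w` as a factor. -/
def IsEnv (w : List Bool) (m i : ℕ) : Prop :=
  1 ≤ m ∧ (i = 1 ∨ i = 2) ∧ w <:+: E m i ∧
    ∀ m' i', 1 ≤ m' → (i' = 1 ∨ i' = 2) → EnvLt m' i' m i → ¬ w <:+: E m' i'

/-- The substitution `φ₁(a) = a`, `φ₁(b) = bb`. -/
def phi1 : Bool → List Bool
  | false => [false]
  | true  => [true, true]

/-- `Θ₁ = φ₁(D∞)` (0-indexed): `φ₁(A (n+1))` is a prefix of `Θ₁` of length `> n`. -/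
def Theta1 (n : ℕ) : Bool := ((A (n + 1)).flatMap phi1).getD n false

/-- The substitution `φ₂(a) = ab`, `φ₂(b) = acac`, over the alphabet `Fin 3`
where `0` stands for `a`, `1` for `b` and `2` for `c`. -/
def phi2 : Bool → List (Fin 3)
  | false => [0, 1]
  | true  => [0, 2, 0, 2]

/-- `Θ₂ = φ₂(D∞)` (0-indexed). -/
def Theta2 (n : ℕ) : Fin 3 := ((A (n + 1)).flatMap phi2).getD n 0

/-- `N₁(x,p)`: the number of letters `x` among the first `p` letters of `Θ₁`. -/
def N1 (x : Bool) (p : ℕ) : ℕ := ((List.range p).map Theta1).count x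

/-- `N₂(x,p)`: the number of letters `x` among the first `p` letters of `Θ₂`. -/
def N2 (x : Fin 3) (p : ℕ) : ℕ := ((List.range p).map Theta2).count x

end PD

/-!
`A (m+1) = A m ++ B m` and `B (m+1) = A m ++ A m`, and `A m`, `B m` differ only in their last
letter. Hence `E m 1` is a prefix of `A m`, and
`A m ++ E m 2 = A (m+1) ++ (A (m-1)).dropLast` is a prefix of `A (m+2)`, which gives both
occurrences. For minimality of the second, `D` has `a` at every even index and
`D (2k+1) = !D k`. Since `E (m+1) 2` begins with `σ(E m 2)`, whose second letter is `b`, an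
occurrence of `E (m+1) 2` starts at an even index `2s`, and reading off its odd letters gives an
occurrence of `E m 2` at index `s`; the induction starts from `E 1 2 = aa`, which does not occur at
indices `0`, `1` of `D = abaa⋯`.
-/

namespace PD

lemma subW_append (u v : List Bool) : subW (u ++ v) = subW u ++ subW v :=
  List.flatMap_append

lemma length_subW (u : List Bool) : (subW u).length = 2 * u.length := by
  induction u with
  | nil => rfl
  | cons x u ih => cases x <;> simp [subW, sub] at ih ⊢ <;> omega

lemma subW_dropLast_prefix (u : List Bool) : subW u.dropLast <+: (subW u).dropLast := by
  rcases u.eq_nil_or_concat with rfl | ⟨v, x, rfl⟩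
  · exact List.nil_prefix
  · have hx : sub x ≠ [] := by cases x <;> simp [sub]
    rw [List.concat_eq_append, List.dropLast_concat, subW_append,
      List.dropLast_append_of_ne_nil (by simpa [subW] using hx)]
    exact List.prefix_append _ _

lemma getD_subW_two_mul (u : List Bool) {i : ℕ} (hi : i < u.length) :
    (subW u).getD (2 * i) false = false := by
  induction u generalizing i with
  | nil => simp at hi
  | cons x u ih =>
    have hx : (sub x).length = 2 := by cases x <;> rfl
    rcases i with _ | i
    · cases x <;> rfl
    · rw [show subW (x :: u) = sub x ++ subW u from rfl,
        List.getD_append_right _ _ _ _ (by omega), hx, show 2 * (i + 1) - 2 = 2 * i by omega]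
      exact ih (by simpa using hi)

lemma getD_subW_two_mul_add_one (u : List Bool) {i : ℕ} (hi : i < u.length) :
    (subW u).getD (2 * i + 1) false = !u.getD i false := by
  induction u generalizing i with
  | nil => simp at hi
  | cons x u ih =>
    have hx : (sub x).length = 2 := by cases x <;> rfl
    rcases i with _ | i
    · cases x <;> rfl
    · rw [show subW (x :: u) = sub x ++ subW u from rfl,
        List.getD_append_right _ _ _ _ (by omega), hx,
        show 2 * (i + 1) + 1 - 2 = 2 * i + 1 by omega, ih (by simpa using hi),
        List.getD_cons_succ]

lemma A_succ (m : ℕ) : A (m + 1) = subW (A m) := Function.iterate_succ_apply' _ _ _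

lemma B_succ (m : ℕ) : B (m + 1) = subW (B m) := Function.iterate_succ_apply' _ _ _

lemma length_A (m : ℕ) : (A m).length = 2 ^ m := by
  induction m with
  | zero => rfl
  | succ m ih => rw [A_succ, length_subW, ih, pow_succ, mul_comm]

lemma A_succ_eq_append (m : ℕ) : A (m + 1) = A m ++ B m := by
  induction m with
  | zero => rfl
  | succ m ih => rw [A_succ, ih, subW_append, ← A_succ, ← B_succ, ← ih]

lemma B_succ_eq_append (m : ℕ) : B (m + 1) = A m ++ A m := by
  induction m with
  | zero => rfl
  | succ m ih => rw [B_succ, ih, subW_append, ← A_succ]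

lemma A_ne_nil (m : ℕ) : A m ≠ [] :=
  List.ne_nil_of_length_pos (by rw [length_A]; positivity)

lemma B_ne_nil (m : ℕ) : B m ≠ [] := by
  cases m with
  | zero => simp [B]
  | succ m => simp [B_succ_eq_append, A_ne_nil]

lemma dropLast_A_eq_dropLast_B (m : ℕ) : (A m).dropLast = (B m).dropLast := by
  induction m with
  | zero => rfl
  | succ m ih =>
    rw [A_succ_eq_append, B_succ_eq_append, List.dropLast_append_of_ne_nil (B_ne_nil m),
      List.dropLast_append_of_ne_nil (A_ne_nil m), ih]

lemma A_prefix_A {m M : ℕ} (h : m ≤ M) : A m <+: A M := by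
  induction h with
  | refl => exact List.prefix_refl _
  | step _ ih => exact ih.trans ⟨_, (A_succ_eq_append _).symm⟩

lemma getD_A_one {m : ℕ} (hm : 1 ≤ m) : (A m).getD 1 false = true := by
  obtain ⟨t, ht⟩ := A_prefix_A hm
  rw [← ht, List.getD_append _ _ _ _ (by decide)]
  rfl

lemma getD_eq_of_prefix {u v : List Bool} (h : u <+: v) {k : ℕ} (hk : k < u.length) :
    v.getD k false = u.getD k false := by
  obtain ⟨w, rfl⟩ := h
  exact List.getD_append u w false k hk

lemma lt_two_pow_succ_self (n : ℕ) : n < 2 ^ (n + 1) :=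
  n.lt_two_pow_self.trans (Nat.pow_lt_pow_succ one_lt_two)

lemma D_eq_getD_A {M n : ℕ} (hn : n < 2 ^ M) : D n = (A M).getD n false := by
  have hn' := lt_two_pow_succ_self n
  rcases le_total (n + 1) M with h | h
  · exact (getD_eq_of_prefix (A_prefix_A h) (by rwa [length_A])).symm
  · exact getD_eq_of_prefix (A_prefix_A h) (by rwa [length_A])

lemma D_two_mul (k : ℕ) : D (2 * k) = false := by
  have hk := lt_two_pow_succ_self k
  rw [D_eq_getD_A (M := k + 2) (by rw [pow_succ]; omega), A_succ]
  exact getD_subW_two_mul _ (by rwa [length_A])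

lemma D_two_mul_add_one (k : ℕ) : D (2 * k + 1) = !D k := by
  have hk := lt_two_pow_succ_self k
  rw [D_eq_getD_A (M := k + 2) (by rw [pow_succ]; omega), A_succ,
    getD_subW_two_mul_add_one _ (by rwa [length_A]), D_eq_getD_A hk]

lemma occursD_of_append_prefix_A {u w : List Bool} {M : ℕ} (h : u ++ w <+: A M) :
    OccursD w (u.length + 1) := by
  refine ⟨by omega, fun k hk => ?_⟩
  have hlen : u.length + k < (u ++ w).length := by simpa using hk
  rw [Nat.add_sub_cancel, D_eq_getD_A (hlen.trans_le (length_A M ▸ h.length_le)),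
    getD_eq_of_prefix h hlen, List.getD_append_right _ _ _ _ (by omega), Nat.add_sub_cancel_left]

lemma OccursD.of_prefix {v w : List Bool} {j : ℕ} (hw : OccursD w j) (h : v <+: w) :
    OccursD v j :=
  ⟨hw.1, fun k hk => (hw.2 k (hk.trans_le h.length_le)).trans (getD_eq_of_prefix h hk)⟩

lemma OccursD.exists_eq_two_mul_add_one {w : List Bool} {j : ℕ} (hw : OccursD w j)
    (hlen : 1 < w.length) (hb : w.getD 1 false = true) : ∃ s, j = 2 * s + 1 := by
  obtain ⟨s, rfl | rfl⟩ := j.even_or_odd'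
  · have h := hw.2 1 hlen
    have := hw.1
    rw [hb, show 2 * s - 1 + 1 = 2 * s by omega, D_two_mul] at h
    exact absurd h Bool.false_ne_true
  · exact ⟨s, rfl⟩

lemma OccursD.of_subW {u : List Bool} {s : ℕ} (h : OccursD (subW u) (2 * s + 1)) :
    OccursD u (s + 1) := by
  refine ⟨by omega, fun k hk => ?_⟩
  have hk' := h.2 (2 * k + 1) (by rw [length_subW]; omega)
  rw [show 2 * s + 1 - 1 + (2 * k + 1) = 2 * (s + k) + 1 by omega, D_two_mul_add_one,
    getD_subW_two_mul_add_one _ hk] at hk'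
  simpa using hk'

lemma L_one_eq_of_isLeast {w : List Bool} {j : ℕ} (h : IsLeast {j | OccursD w j} j) :
    L w 1 = j := by
  rw [L, Nat.sub_self, Nat.nth_zero]
  exact h.csInf_eq

lemma E_two_succ (m : ℕ) : E (m + 1) 2 = B (m + 1) ++ (A m).dropLast := by
  rw [E, if_neg (by decide), Nat.add_sub_cancel, A_succ_eq_append, B_succ_eq_append,
    List.dropLast_append_of_ne_nil (B_ne_nil m), dropLast_A_eq_dropLast_B, List.append_assoc]

lemma subW_E_two_prefix (m : ℕ) : subW (E (m + 1) 2) <+: E (m + 2) 2 := by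
  rw [E_two_succ, E_two_succ, subW_append, ← B_succ, A_succ m]
  exact (List.prefix_append_right_inj _).mpr (subW_dropLast_prefix _)

lemma A_append_E_two_prefix (m : ℕ) : A (m + 1) ++ E (m + 1) 2 <+: A (m + 3) := by
  rw [E_two_succ, ← List.append_assoc, ← A_succ_eq_append, A_succ_eq_append (m + 2),
    B_succ_eq_append]
  exact (List.prefix_append_right_inj _).mpr ((List.dropLast_prefix _).trans
    ((A_prefix_A m.le_succ).trans (List.prefix_append _ _)))

lemma le_of_occursD_E_two {m : ℕ} (hm : 1 ≤ m) {j : ℕ} (hj : OccursD (E m 2) j) :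
    2 ^ m + 1 ≤ j := by
  induction m, hm using Nat.le_induction generalizing j with
  | base =>
    rw [show E 1 2 = [false, false] from rfl] at hj
    have := hj.1
    by_contra! hlt
    rw [pow_one] at hlt
    -- for `j ∈ {1, 2}` the offset `2 - j` points at `D 1 = b`
    have h := hj.2 (2 - j) (by simp; omega)
    rw [show j - 1 + (2 - j) = 1 by omega] at h
    interval_cases j <;> exact absurd h (by decide)
  | succ m hm ih =>
    obtain ⟨n, rfl⟩ := Nat.exists_eq_add_of_le' hm
    have hlen : 2 < (E (n + 1 + 1) 2).length := by
      rw [E_two_succ, B_succ_eq_append, List.length_append, List.length_append, length_A]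
      have := Nat.one_lt_two_pow_iff.mpr (Nat.succ_ne_zero n)
      omega
    have hb : (E (n + 1 + 1) 2).getD 1 false = true := by
      rw [E_two_succ, B_succ_eq_append, List.append_assoc,
        List.getD_append _ _ _ _ (by rw [length_A]; exact Nat.one_lt_two_pow_iff.mpr (by omega)),
        getD_A_one (by omega)]
    obtain ⟨s, rfl⟩ := hj.exists_eq_two_mul_add_one (by omega) hb
    have := ih (hj.of_prefix (subW_E_two_prefix n)).of_subW
    rw [pow_succ]
    omega

end PD

open PD
/-- For every `m ≥ 1`: (1) the first occurrence of `E m 1` in the doubling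
sequence starts at position `1` (it is a prefix, with empty preceding prefix);
(2) the first occurrence of `E m 2` starts at position `2^m + 1` (the preceding
prefix of the doubling sequence is `A m`). -/
theorem doubling_first_occurrence (m : ℕ) (hm : 1 ≤ m) :
    (OccursD (E m 1) 1 ∧ L (E m 1) 1 = 1) ∧
      (OccursD (E m 2) (2 ^ m + 1) ∧ (∀ j, OccursD (E m 2) j → 2 ^ m + 1 ≤ j) ∧
        L (E m 2) 1 = 2 ^ m + 1) := by
  obtain ⟨n, rfl⟩ := Nat.exists_eq_add_of_le' hm
  have first : IsLeast {j | OccursD (E (n + 1) 1) j} 1 :=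
    ⟨occursD_of_append_prefix_A (u := []) (List.dropLast_prefix (A (n + 1))),
      fun j hj => hj.1⟩
  have second : IsLeast {j | OccursD (E (n + 1) 2) j} (2 ^ (n + 1) + 1) :=
    ⟨length_A (n + 1) ▸ occursD_of_append_prefix_A (A_append_E_two_prefix n),
      fun j hj => le_of_occursD_E_two hm hj⟩
  exact ⟨⟨first.1, L_one_eq_of_isLeast first⟩, second.1, fun j hj => second.2 hj,
    L_one_eq_of_isLeast second⟩
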